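/- arXiv:2210.04124 — 6 statements merged into one kernel-verified Lean document; each statement's English description precedes it below -/
import Mathlib

section
/- Let Â be a symmetric n×n real matrix, and let {W_k}_{k=0}^m be n×n matrices with Σ_k W_kᵀW_k = Iₙ, each of the form W_k = Uᵀ D_k U with D_k diagonal, where Â = Uᵀ(I-Λ)U for diagonal Λ and orthogonal U. If all feature weight matrices are equal, W ∈ ℝ^{c×c}, then the framelet convolution update Σ_k W_kᵀ Â W_k H W equals Â H W for all H ∈ ℝ^{n×c}. -/
/-! Every `W_k` and `Â` is of the form `Uᵀ D U` with `D` diagonal, so `W_k` is symmetric and,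
because `U Uᵀ = 1`, all of them commute with each other. Hence `W_kᵀ Â W_k = Â W_kᵀ W_k`, and
summing over `k` the tight-frame identity `∑ W_kᵀ W_k = 1` leaves `Â`. -/

open Matrix

namespace Matrix

variable {n R : Type*} [Fintype n] [CommSemiring R]

theorem IsSymm.transpose_mul_mul {A : Matrix n n R} (hA : A.IsSymm) (B : Matrix n n R) :
    (Bᵀ * A * B).IsSymm := by
  rw [IsSymm, transpose_mul, transpose_mul, transpose_transpose, hA.eq, Matrix.mul_assoc]

theorem transpose_conj_mul_transpose_conj [DecidableEq n] {U : Matrix n n R} (hU : U * Uᵀ = 1)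
    (A B : Matrix n n R) : (Uᵀ * A * U) * (Uᵀ * B * U) = Uᵀ * (A * B) * U := by
  calc (Uᵀ * A * U) * (Uᵀ * B * U) = Uᵀ * A * (U * Uᵀ) * B * U := by
        simp only [Matrix.mul_assoc]
    _ = Uᵀ * (A * B) * U := by rw [hU, Matrix.mul_one, Matrix.mul_assoc Uᵀ A]

theorem commute_transpose_conj [DecidableEq n] {U A B : Matrix n n R} (hU : U * Uᵀ = 1)
    (hAB : Commute A B) :
    Commute (Uᵀ * A * U) (Uᵀ * B * U) := by
  rw [commute_iff_eq, transpose_conj_mul_transpose_conj hU, transpose_conj_mul_transpose_conj hU,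
    hAB.eq]

end Matrix

theorem framelet_conv_collapse_general (n c m : ℕ)
    (Ahat : Matrix (Fin n) (Fin n) ℝ)
    (U : Matrix (Fin n) (Fin n) ℝ) (hU' : U * Uᵀ = 1)
    (Λ : Fin n → ℝ)
    (hAdiag : Ahat = Uᵀ * Matrix.diagonal (fun i => 1 - Λ i) * U)
    (W : Fin (m + 1) → Matrix (Fin n) (Fin n) ℝ)
    (D : Fin (m + 1) → Fin n → ℝ)
    (hW : ∀ k, W k = Uᵀ * Matrix.diagonal (D k) * U)
    (htight : ∑ k, (W k)ᵀ * W k = 1)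
    (Wc : Matrix (Fin c) (Fin c) ℝ) (H : Matrix (Fin n) (Fin c) ℝ) :
    ∑ k, (W k)ᵀ * Ahat * W k * H * Wc = Ahat * H * Wc := by
  have hcomm : ∀ k, Commute (W k)ᵀ Ahat := fun k => by
    rw [hW k, ((isSymm_diagonal (D k)).transpose_mul_mul U).eq, hAdiag]
    exact commute_transpose_conj hU' (commute_diagonal _ _)
  calc ∑ k, (W k)ᵀ * Ahat * W k * H * Wc = ∑ k, Ahat * ((W k)ᵀ * W k) * H * Wc := by
        refine Finset.sum_congr rfl fun k _ => ?_
        rw [(hcomm k).eq, Matrix.mul_assoc Ahat]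
    _ = Ahat * (∑ k, (W k)ᵀ * W k) * H * Wc := by
        simp only [Matrix.mul_sum, Matrix.sum_mul]
    _ = Ahat * H * Wc := by rw [htight, Matrix.mul_one]

/-- When all feature weight matrices coincide, the framelet convolution update
collapses to the ordinary GCN update `Â H W`. -/
theorem framelet_conv_collapse (n c m : ℕ)
    (Ahat : Matrix (Fin n) (Fin n) ℝ) (hA : Ahat.IsSymm)
    (U : Matrix (Fin n) (Fin n) ℝ) (hU : Uᵀ * U = 1) (hU' : U * Uᵀ = 1)
    (Λ : Fin n → ℝ)
    (hAdiag : Ahat = Uᵀ * Matrix.diagonal (fun i => 1 - Λ i) * U)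
    (W : Fin (m + 1) → Matrix (Fin n) (Fin n) ℝ)
    (D : Fin (m + 1) → Fin n → ℝ)
    (hW : ∀ k, W k = Uᵀ * Matrix.diagonal (D k) * U)
    (htight : ∑ k, (W k)ᵀ * W k = 1)
    (Wc : Matrix (Fin c) (Fin c) ℝ) (H : Matrix (Fin n) (Fin c) ℝ) :
    ∑ k, (W k)ᵀ * Ahat * W k * H * Wc = Ahat * H * Wc :=
  framelet_conv_collapse_general n c m Ahat U hU' Λ hAdiag W D hW htight Wc H
end

section
/- For any λ^W with |λ^W| ≤ 1, the function g(λ) = |cos²(λ/8) + λ^W sin²(λ/8)| · |1 − λ| on [0,2] satisfies g(λ) ≤ g(0) = 1 for all λ ∈ [0,2]; moreover cos²(λ/8) + λ^W sin²(λ/8) ∈ (0,1] and is non-increasing in λ on [0,2]. -/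
/-!
Writing the low-pass response as `cos² x + w sin² x = 1 - (1 - w) sin² x` with `x = λ/8`, it is
at most `1` and non-increasing while `sin² x` increases, i.e. on `[0, π/2] ⊇ [0, 1/4]`. It is
positive because it dominates `cos² x - sin² x = cos 2x > 0` for `|x| < π/4`. Since also
`|1 - λ| ≤ 1` on `[0, 2]`, the product is at most `1 = g 0`.
-/

open Real Set

lemma cos_sq_add_mul_sin_sq_eq (w x : ℝ) :
    cos x ^ 2 + w * sin x ^ 2 = 1 - (1 - w) * sin x ^ 2 := by
  rw [cos_sq']
  ring

lemma cos_sq_add_mul_sin_sq_le_one {w : ℝ} (hw : w ≤ 1) (x : ℝ) :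
    cos x ^ 2 + w * sin x ^ 2 ≤ 1 := by
  rw [cos_sq_add_mul_sin_sq_eq]
  nlinarith [sq_nonneg (sin x)]

lemma cos_sq_add_mul_sin_sq_pos {w : ℝ} (hw : -1 ≤ w) {x : ℝ}
    (hx : x ∈ Ioo (-(π / 4)) (π / 4)) : 0 < cos x ^ 2 + w * sin x ^ 2 := by
  have hcos : 0 < cos (2 * x) := cos_pos_of_mem_Ioo ⟨by linarith [hx.1], by linarith [hx.2]⟩
  rw [cos_two_mul'] at hcos
  nlinarith [sq_nonneg (sin x)]

lemma monotoneOn_sin_sq : MonotoneOn (fun x => sin x ^ 2) (Icc 0 (π / 2)) := by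
  intro a ha b hb hab
  have hsin : sin a ≤ sin b :=
    sin_le_sin_of_le_of_le_pi_div_two (by linarith [ha.1, pi_pos]) hb.2 hab
  have ha_nonneg : 0 ≤ sin a := sin_nonneg_of_nonneg_of_le_pi ha.1 (by linarith [ha.2, pi_pos])
  exact pow_le_pow_left₀ ha_nonneg hsin 2

lemma antitoneOn_cos_sq_add_mul_sin_sq {w : ℝ} (hw : w ≤ 1) :
    AntitoneOn (fun x => cos x ^ 2 + w * sin x ^ 2) (Icc 0 (π / 2)) := by
  intro a ha b hb hab
  simp only [cos_sq_add_mul_sin_sq_eq]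
  have := monotoneOn_sin_sq ha hb hab
  nlinarith

/-- For `|λ^W| ≤ 1`, the per-layer amplification magnitude
`g(λ) = |cos²(λ/8) + λ^W sin²(λ/8)|·|1−λ|` is maximized at `λ = 0` with `g(0) = 1`,
and `cos²(λ/8) + λ^W sin²(λ/8) ∈ (0,1]` is non-increasing on `[0,2]`. -/
theorem haar_lfd_amplification (lW : ℝ) (hlW : |lW| ≤ 1)
    (g h : ℝ → ℝ)
    (hg : ∀ l, g l = |Real.cos (l / 8) ^ 2 + lW * Real.sin (l / 8) ^ 2| * |1 - l|)
    (hh : ∀ l, h l = Real.cos (l / 8) ^ 2 + lW * Real.sin (l / 8) ^ 2) :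
    g 0 = 1 ∧
    (∀ l ∈ Set.Icc (0 : ℝ) 2, g l ≤ g 0) ∧
    (∀ l ∈ Set.Icc (0 : ℝ) 2, h l ∈ Set.Ioc (0 : ℝ) 1) ∧
    AntitoneOn h (Set.Icc (0 : ℝ) 2) := by
  obtain ⟨hlW_ge, hlW_le⟩ := abs_le.mp hlW
  have hpi := pi_gt_three
  have hg0 : g 0 = 1 := by simp [hg]
  have hmem : ∀ l ∈ Icc (0 : ℝ) 2, h l ∈ Ioc (0 : ℝ) 1 := fun l hl =>
    hh l ▸ ⟨cos_sq_add_mul_sin_sq_pos hlW_ge ⟨by linarith [hl.1], by linarith [hl.2]⟩,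
      cos_sq_add_mul_sin_sq_le_one hlW_le _⟩
  refine ⟨hg0, fun l hl => ?_, hmem, ?_⟩
  · have hh_abs : |h l| ≤ 1 := abs_le.mpr ⟨by linarith [(hmem l hl).1], (hmem l hl).2⟩
    have hl_abs : |1 - l| ≤ 1 := abs_le.mpr ⟨by linarith [hl.2], by linarith [hl.1]⟩
    rw [hg0, hg, ← hh]
    exact mul_le_one₀ hh_abs (abs_nonneg _) hl_abs
  · rw [show h = (fun x => cos x ^ 2 + lW * sin x ^ 2) ∘ (· / 8) from funext hh]
    refine (antitoneOn_cos_sq_add_mul_sin_sq hlW_le).comp_MonotoneOn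
      (fun a _ b _ hab => by linarith) fun l hl => ⟨by linarith [hl.1], by linarith [hl.2]⟩
end

section
/- Let L̂ be a symmetric positive semidefinite n×n matrix with eigenvalues in [0, ρ] with ρ > 0, and let Δ be a symmetric matrix commuting with L̂ with nonnegative eigenvalues such that for every eigenvalue λ_i of L̂ with λ_i > 0, the corresponding eigenvalue δ_i of Δ satisfies λ_i + ε δ_i ≥ ϑ for some ϑ > 0. Let H(t) solve Ḣ(t) = −(L̂ + εΔ)H(t) with H(0) = H₀ ∈ ℝ^{n×c}. Then the Dirichlet energy satisfies E(H(t)) = (1/2)tr(H(t)ᵀ L̂ H(t)) ≤ (ρ/2) e^{−2tϑ} ‖H₀‖² for all t ≥ 0, and in particular E(H(t)) → 0 as t → ∞. -/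
/-!
Rotating by the orthogonal matrix `U` turns the flow into the decoupled scalar equations
`ġ = -(λᵢ + εδᵢ) g`, so the `i`-th row of `U H(t)` decays like `e^{-(λᵢ + εδᵢ)t}`. The energy
is `½ ∑ᵢ λᵢ ‖(U H(t))ᵢ‖²`: rows with `λᵢ = 0` do not contribute, and the others decay at rate at
least `ϑ` with weight at most `ρ`. Since `U` preserves the Frobenius norm, this gives the bound.
-/

open Matrix Filter Topology

lemma eq_mul_exp_of_hasDerivAt_neg_mul {f : ℝ → ℝ} (μ : ℝ)
    (hf : ∀ t, HasDerivAt f (-(μ * f t)) t) (t : ℝ) :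
    f t = f 0 * Real.exp (-(μ * t)) := by
  have hconst : ∀ s, HasDerivAt (fun s => f s * Real.exp (μ * s)) 0 s := fun s =>
    ((hf s).fun_mul ((hasDerivAt_id s).const_mul μ).exp).congr_deriv (by ring)
  have h := is_const_of_deriv_eq_zero (fun s => (hconst s).differentiableAt)
    (fun s => (hconst s).deriv) t 0
  simp only [mul_zero, Real.exp_zero, mul_one] at h
  rw [← h, Real.exp_neg, mul_inv_cancel_right₀ (Real.exp_pos _).ne']

section Matrix

variable {m p : Type*} [Fintype m]

lemma hasDerivAt_mul_apply {H : ℝ → Matrix m p ℝ} {H' : Matrix m p ℝ} {t : ℝ}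
    (A : Matrix m m ℝ) (hH : ∀ j k, HasDerivAt (fun s => H s j k) (H' j k) t) (i : m) (k : p) :
    HasDerivAt (fun s => (A * H s) i k) ((A * H') i k) t := by
  simp only [mul_apply]
  exact HasDerivAt.fun_sum fun j _ => (hH j k).const_mul (A i j)

variable [Fintype p]

lemma trace_transpose_mul_self_eq_sum_sq (X : Matrix m p ℝ) :
    (Xᵀ * X).trace = ∑ i, ∑ k, X i k ^ 2 := by
  simp only [trace, diag, mul_apply, transpose_apply, sq]
  exact Finset.sum_comm

variable [DecidableEq m]

lemma sum_sq_mul_eq_of_transpose_mul_self_eq_one {U : Matrix m m ℝ} (hU : Uᵀ * U = 1)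
    (X : Matrix m p ℝ) :
    ∑ i, ∑ k, (U * X) i k ^ 2 = ∑ i, ∑ k, X i k ^ 2 := by
  rw [← trace_transpose_mul_self_eq_sum_sq, ← trace_transpose_mul_self_eq_sum_sq, transpose_mul,
    Matrix.mul_assoc, ← Matrix.mul_assoc Uᵀ, hU, Matrix.one_mul]

lemma trace_transpose_mul_diagonal_mul (d : m → ℝ) (X : Matrix m p ℝ) :
    (Xᵀ * diagonal d * X).trace = ∑ i, d i * ∑ k, X i k ^ 2 := by
  simp only [trace, diag, mul_apply (M := Xᵀ * diagonal d), mul_diagonal, transpose_apply,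
    Finset.mul_sum]
  rw [Finset.sum_comm]
  exact Finset.sum_congr rfl fun i _ => Finset.sum_congr rfl fun k _ => by ring

lemma trace_transpose_mul_conj_diagonal_mul (U : Matrix m m ℝ) (d : m → ℝ) (X : Matrix m p ℝ) :
    (Xᵀ * (Uᵀ * diagonal d * U) * X).trace = ∑ i, d i * ∑ k, (U * X) i k ^ 2 := by
  rw [← trace_transpose_mul_diagonal_mul, transpose_mul]
  simp only [Matrix.mul_assoc]

lemma mul_conj_diagonal {U : Matrix m m ℝ} (hU : U * Uᵀ = 1) (d : m → ℝ) :
    U * (Uᵀ * diagonal d * U) = diagonal d * U := by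
  rw [Matrix.mul_assoc, ← Matrix.mul_assoc U, hU, Matrix.one_mul]

end Matrix

lemma mul_sq_mul_exp_le {l μ ρ ϑ t : ℝ} (g : ℝ) (hl : l ∈ Set.Icc 0 ρ) (hgap : 0 < l → ϑ ≤ μ)
    (ht : 0 ≤ t) :
    l * (g * Real.exp (-(μ * t))) ^ 2 ≤ ρ * Real.exp (-2 * t * ϑ) * g ^ 2 := by
  obtain ⟨hl0, hlρ⟩ := hl
  rcases hl0.eq_or_lt with rfl | hpos
  · rw [zero_mul]
    positivity
  · have hexp : Real.exp (-(μ * t)) ^ 2 ≤ Real.exp (-2 * t * ϑ) := by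
      rw [← Real.exp_nat_mul, Real.exp_le_exp]
      push_cast
      nlinarith [hgap hpos]
    calc l * (g * Real.exp (-(μ * t))) ^ 2 = l * Real.exp (-(μ * t)) ^ 2 * g ^ 2 := by ring
      _ ≤ ρ * Real.exp (-2 * t * ϑ) * g ^ 2 := by gcongr; linarith

lemma sum_mul_sum_sq_mul_exp_le {m p : Type*} [Fintype m] [Fintype p] {lam μ : m → ℝ}
    {ρ ϑ t : ℝ} (g : Matrix m p ℝ) (hlam : ∀ i, lam i ∈ Set.Icc 0 ρ)
    (hgap : ∀ i, 0 < lam i → ϑ ≤ μ i) (ht : 0 ≤ t) :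
    ∑ i, lam i * ∑ k, (g i k * Real.exp (-(μ i * t))) ^ 2 ≤
      ρ * Real.exp (-2 * t * ϑ) * ∑ i, ∑ k, g i k ^ 2 := by
  simp only [Finset.mul_sum]
  exact Finset.sum_le_sum fun i _ => Finset.sum_le_sum fun k _ =>
    mul_sq_mul_exp_le (g i k) (hlam i) (hgap i) ht

theorem perturbed_gradient_flow_is_LFD_general (n c : ℕ)
    (L Δ U : Matrix (Fin n) (Fin n) ℝ)
    (hU : Uᵀ * U = 1) (hU' : U * Uᵀ = 1)
    (lam δ : Fin n → ℝ) (ρ ε ϑ : ℝ)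
    (hL : L = Uᵀ * Matrix.diagonal lam * U)
    (hΔ : Δ = Uᵀ * Matrix.diagonal δ * U)
    (hlam : ∀ i, lam i ∈ Set.Icc 0 ρ)
    (hϑ : 0 < ϑ)
    (hgap : ∀ i, 0 < lam i → ϑ ≤ lam i + ε * δ i)
    (H : ℝ → Matrix (Fin n) (Fin c) ℝ)
    (hderiv : ∀ t i k, HasDerivAt (fun s => H s i k) ((-((L + ε • Δ) * H t)) i k) t)
    (E : Matrix (Fin n) (Fin c) ℝ → ℝ)
    (hE : ∀ X, E X = (1 / 2) * (Xᵀ * L * X).trace) :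
    (∀ t : ℝ, 0 ≤ t →
      E (H t) ≤ (ρ / 2) * Real.exp (-2 * t * ϑ) * ∑ i, ∑ k, (H 0 i k) ^ 2) ∧
    Filter.Tendsto (fun t => E (H t)) Filter.atTop (nhds 0) := by
  set μ : Fin n → ℝ := fun i => lam i + ε * δ i
  set G : ℝ → Matrix (Fin n) (Fin c) ℝ := fun t => U * H t
  have hgen : U * (L + ε • Δ) = diagonal μ * U := by
    rw [Matrix.mul_add, Matrix.mul_smul, hL, hΔ, mul_conj_diagonal hU', mul_conj_diagonal hU',
      ← smul_mul, ← add_mul, ← diagonal_smul, diagonal_add]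
    rfl
  have hmodes : ∀ t i k, G t i k = G 0 i k * Real.exp (-(μ i * t)) := fun t i k => by
    refine eq_mul_exp_of_hasDerivAt_neg_mul (f := fun s => G s i k) (μ i) (fun s => ?_) t
    have h := hasDerivAt_mul_apply U (hderiv s) i k
    rwa [Matrix.mul_neg, ← Matrix.mul_assoc, hgen, Matrix.mul_assoc, neg_apply,
      diagonal_mul] at h
  have henergy : ∀ t, E (H t) = 1 / 2 * ∑ i, lam i * ∑ k, G t i k ^ 2 := fun t => by
    rw [hE, hL, trace_transpose_mul_conj_diagonal_mul]
  have hbound : ∀ t : ℝ, 0 ≤ t →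
      E (H t) ≤ (ρ / 2) * Real.exp (-2 * t * ϑ) * ∑ i, ∑ k, (H 0 i k) ^ 2 := fun t ht => by
    rw [henergy, ← sum_sq_mul_eq_of_transpose_mul_self_eq_one hU (H 0)]
    simp only [hmodes t]
    linarith [sum_mul_sum_sq_mul_exp_le (G 0) hlam hgap ht]
  have hnonneg : ∀ t, 0 ≤ E (H t) := fun t => by
    rw [henergy]
    exact mul_nonneg (by norm_num) (Finset.sum_nonneg fun i _ =>
      mul_nonneg (hlam i).1 (by positivity))
  have hexp : Tendsto (fun t => Real.exp (-2 * t * ϑ)) atTop (𝓝 0) :=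
    Real.tendsto_exp_atBot.comp <|
      (tendsto_id.const_mul_atTop_of_neg (by linarith : -2 * ϑ < 0)).congr fun t => by
        rw [id]; ring
  refine ⟨hbound, squeeze_zero' (.of_forall hnonneg) ((eventually_ge_atTop 0).mono hbound) ?_⟩
  simpa using (hexp.const_mul (ρ / 2)).mul_const (∑ i, ∑ k, H 0 i k ^ 2)

/-- The gradient flow of the perturbed framelet energy,
`Ḣ(t) = −(L̂ + εΔ)H(t)`, has exponentially decaying Dirichlet energy:
`E(H(t)) ≤ (ρ/2) e^{−2tϑ} ‖H₀‖²_F`, hence `E(H(t)) → 0`. -/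
theorem perturbed_gradient_flow_is_LFD (n c : ℕ)
    (L Δ U : Matrix (Fin n) (Fin n) ℝ)
    (hU : Uᵀ * U = 1) (hU' : U * Uᵀ = 1)
    (lam δ : Fin n → ℝ) (ρ ε ϑ : ℝ) (hρ : 0 < ρ)
    (hL : L = Uᵀ * Matrix.diagonal lam * U)
    (hΔ : Δ = Uᵀ * Matrix.diagonal δ * U)
    (hlam : ∀ i, lam i ∈ Set.Icc 0 ρ) (hδ : ∀ i, 0 ≤ δ i)
    (hε : 0 ≤ ε) (hϑ : 0 < ϑ)
    (hgap : ∀ i, 0 < lam i → ϑ ≤ lam i + ε * δ i)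
    (H : ℝ → Matrix (Fin n) (Fin c) ℝ)
    (hderiv : ∀ t i k, HasDerivAt (fun s => H s i k) ((-((L + ε • Δ) * H t)) i k) t)
    (E : Matrix (Fin n) (Fin c) ℝ → ℝ)
    (hE : ∀ X, E X = (1 / 2) * (Xᵀ * L * X).trace) :
    (∀ t : ℝ, 0 ≤ t →
      E (H t) ≤ (ρ / 2) * Real.exp (-2 * t * ϑ) * ∑ i, ∑ k, (H 0 i k) ^ 2) ∧
    Filter.Tendsto (fun t => E (H t)) Filter.atTop (nhds 0) :=
  perturbed_gradient_flow_is_LFD_general n c L Δ U hU hU' lam δ ρ ε ϑ hL hΔ hlam hϑ hgap H hderiv E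
    hE
end

section
/- For all λ ∈ [0,2], the Haar two-scale energy gap δ(λ) = cos²(λ/8)cos²(λ/16) − sin²(λ/8)cos²(λ/16) − sin²(λ/16) is nonnegative. -/
/-!
Eliminating `sin² = 1 - cos²`, the gap equals `2 (cos(λ/8) cos(λ/16))² - 1`. Since
`cos² x ≥ 1 - x²`, both squared cosines are at least `3/4` for `λ ∈ [0, 2]`, so the product
of squares is at least `9/16 > 1/2`.
-/

open Real

theorem cos_sq_mul_cos_sq_sub_sin_sq_mul_cos_sq_sub_sin_sq (a b : ℝ) :
    cos a ^ 2 * cos b ^ 2 - sin a ^ 2 * cos b ^ 2 - sin b ^ 2 = 2 * (cos a * cos b) ^ 2 - 1 := by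
  rw [sin_sq, sin_sq]
  ring

theorem one_sub_sq_le_cos_sq (x : ℝ) : 1 - x ^ 2 ≤ cos x ^ 2 := by
  rw [cos_sq']
  linarith [sin_sq_le_sq (x := x)]

theorem three_quarters_le_cos_sq {x : ℝ} (hx : |x| ≤ 1 / 2) : 3 / 4 ≤ cos x ^ 2 := by
  have hx2 : x ^ 2 ≤ (1 / 2) ^ 2 := sq_abs x ▸ pow_le_pow_left₀ (abs_nonneg x) hx 2
  linarith [one_sub_sq_le_cos_sq x]

theorem half_le_sq_cos_mul_cos {a b : ℝ} (ha : |a| ≤ 1 / 2) (hb : |b| ≤ 1 / 2) :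
    1 / 2 ≤ (cos a * cos b) ^ 2 := by
  have hca := three_quarters_le_cos_sq ha
  have hcb := three_quarters_le_cos_sq hb
  rw [mul_pow]
  nlinarith

/-- Nonnegativity of the two-scale Haar energy gap
`δ(λ) = cos²(λ/8)cos²(λ/16) − sin²(λ/8)cos²(λ/16) − sin²(λ/16)` on `[0,2]`. -/
theorem haar_two_scale_energy_gap_nonneg :
    ∀ l ∈ Set.Icc (0 : ℝ) 2,
      0 ≤ Real.cos (l / 8) ^ 2 * Real.cos (l / 16) ^ 2
          - Real.sin (l / 8) ^ 2 * Real.cos (l / 16) ^ 2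
          - Real.sin (l / 16) ^ 2 := by
  rintro l ⟨hl0, hl2⟩
  rw [cos_sq_mul_cos_sq_sub_sin_sq_mul_cos_sq_sub_sin_sq]
  have h8 : |l / 8| ≤ 1 / 2 := abs_le.2 ⟨by linarith, by linarith⟩
  have h16 : |l / 16| ≤ 1 / 2 := abs_le.2 ⟨by linarith, by linarith⟩
  linarith [half_le_sq_cos_mul_cos h8 h16]
end

section
/- Let Â = Uᵀ(I−Λ)U be symmetric with Λ diagonal, λ_i ∈ [0,2], and let W₀ = Uᵀcos(Λ/8)U, W₁ = Uᵀsin(Λ/8)U be the one-scale Haar framelet transforms. For feature weights W₀' = I_c and W₁' = λ^W I_c, the vectorized layer map T = W₀' ⊗ W₀ᵀÂW₀ + W₁' ⊗ W₁ᵀÂW₁ has eigenvalues (cos²(λ_i/8) + λ^W sin²(λ_i/8))(1 − λ_i), each with multiplicity c, with eigenvectors e_k ⊗ u_i. -/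
/-!
When `U * Uᵀ = 1`, every matrix `Uᵀ * diagonal d * U` is symmetric and has the rows `uᵢ` of `U`
as eigenvectors with eigenvalues `d i`. Hence `W₀ᵀ Â W₀` and `W₁ᵀ Â W₁` act on `uᵢ` by
`cos²(λᵢ/8)(1 - λᵢ)` and `sin²(λᵢ/8)(1 - λᵢ)`, and a Kronecker product of eigenvectors is an
eigenvector of the Kronecker product, with the product eigenvalue.
-/

open Matrix Kronecker

section

variable {R m n : Type*} [CommSemiring R] [Fintype m] [Fintype n]

theorem kronecker_mulVec_tmul (A : Matrix m m R) (B : Matrix n n R) (f : m → R) (g : n → R) :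
    (A ⊗ₖ B) *ᵥ (fun p => f p.1 * g p.2) = fun p => (A *ᵥ f) p.1 * (B *ᵥ g) p.2 := by
  funext p
  simp only [mulVec, dotProduct, kroneckerMap_apply, Fintype.sum_prod_type, Finset.sum_mul_sum]
  exact Finset.sum_congr rfl fun _ _ => Finset.sum_congr rfl fun _ _ => by ring

theorem kronecker_mulVec_tmul_of_mulVec_eq_smul {A : Matrix m m R} {B : Matrix n n R}
    {f : m → R} {g : n → R} {a b : R} (hf : A *ᵥ f = a • f) (hg : B *ᵥ g = b • g) :
    (A ⊗ₖ B) *ᵥ (fun p => f p.1 * g p.2) = (a * b) • fun p => f p.1 * g p.2 := by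
  rw [kronecker_mulVec_tmul, hf, hg]
  funext p
  simp only [Pi.smul_apply, smul_eq_mul]
  ring

theorem mul_mulVec_of_mulVec_eq_smul {A B : Matrix n n R} {v : n → R} {a b : R}
    (hA : A *ᵥ v = a • v) (hB : B *ᵥ v = b • v) : (A * B) *ᵥ v = (a * b) • v := by
  rw [← mulVec_mulVec, hB, mulVec_smul, hA, smul_smul, mul_comm]

end

section

variable {R n : Type*} [CommSemiring R] [Fintype n] [DecidableEq n]

theorem transpose_conj_diagonal (U : Matrix n n R) (d : n → R) :
    (Uᵀ * diagonal d * U)ᵀ = Uᵀ * diagonal d * U := by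
  rw [transpose_mul, transpose_mul, diagonal_transpose, transpose_transpose, Matrix.mul_assoc]

theorem conj_diagonal_mulVec_row {U : Matrix n n R} (hU : U * Uᵀ = 1) (d : n → R) (i : n) :
    (Uᵀ * diagonal d * U) *ᵥ U i = d i • U i := by
  have hrow : U i = Uᵀ *ᵥ Pi.single i 1 := by rw [mulVec_single_one]; rfl
  rw [hrow, mulVec_mulVec, Matrix.mul_assoc (Uᵀ * diagonal d), hU, Matrix.mul_one,
    ← mulVec_mulVec, diagonal_mulVec_single, mul_one, ← mulVec_smul,
    ← Pi.single_smul', smul_eq_mul, mul_one]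

theorem conj_diagonal_sandwich_mulVec_row {U : Matrix n n R} (hU : U * Uᵀ = 1) (d e : n → R)
    (i : n) :
    ((Uᵀ * diagonal d * U)ᵀ * (Uᵀ * diagonal e * U) * (Uᵀ * diagonal d * U)) *ᵥ U i
      = (d i * e i * d i) • U i := by
  have hd := conj_diagonal_mulVec_row hU d i
  rw [transpose_conj_diagonal]
  exact mul_mulVec_of_mulVec_eq_smul
    (mul_mulVec_of_mulVec_eq_smul hd (conj_diagonal_mulVec_row hU e i)) hd

end

theorem framelet_layer_spectrum_general (n c : ℕ) (Λ : Fin n → ℝ)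
    (U : Matrix (Fin n) (Fin n) ℝ) (hU' : U * Uᵀ = 1)
    (lamW : ℝ)
    (Ahat W0 W1 : Matrix (Fin n) (Fin n) ℝ)
    (hA : Ahat = Uᵀ * Matrix.diagonal (fun i => 1 - Λ i) * U)
    (hW0 : W0 = Uᵀ * Matrix.diagonal (fun i => Real.cos (Λ i / 8)) * U)
    (hW1 : W1 = Uᵀ * Matrix.diagonal (fun i => Real.sin (Λ i / 8)) * U)
    (T : Matrix (Fin c × Fin n) (Fin c × Fin n) ℝ)
    (hT : T = (1 : Matrix (Fin c) (Fin c) ℝ) ⊗ₖ (W0ᵀ * Ahat * W0)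
            + (lamW • (1 : Matrix (Fin c) (Fin c) ℝ)) ⊗ₖ (W1ᵀ * Ahat * W1)) :
    ∀ (k : Fin c) (i : Fin n),
      T.mulVec (fun p => (if p.1 = k then (1 : ℝ) else 0) * U i p.2)
        = ((Real.cos (Λ i / 8) ^ 2 + lamW * Real.sin (Λ i / 8) ^ 2) * (1 - Λ i)) •
            (fun p => (if p.1 = k then (1 : ℝ) else 0) * U i p.2) := by
  intro k i
  subst hA hW0 hW1 hT
  have he_one : (1 : Matrix (Fin c) (Fin c) ℝ) *ᵥ (fun a => if a = k then 1 else 0)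
      = (1 : ℝ) • fun a => if a = k then 1 else 0 := by rw [one_mulVec, one_smul]
  have he_lamW : (lamW • 1 : Matrix (Fin c) (Fin c) ℝ) *ᵥ (fun a => if a = k then 1 else 0)
      = lamW • fun a => if a = k then 1 else 0 := by rw [smul_mulVec, one_mulVec]
  rw [add_mulVec,
    kronecker_mulVec_tmul_of_mulVec_eq_smul he_one (conj_diagonal_sandwich_mulVec_row hU' _ _ i),
    kronecker_mulVec_tmul_of_mulVec_eq_smul he_lamW (conj_diagonal_sandwich_mulVec_row hU' _ _ i),
    ← add_smul]
  congr 1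
  ring

/-- Spectrum of the vectorized one-scale Haar framelet layer: with weights
`W₀' = I_c`, `W₁' = λ^W I_c`, the map `T = W₀' ⊗ W₀ᵀÂW₀ + W₁' ⊗ W₁ᵀÂW₁` has
eigenvectors `e_k ⊗ u_i` with eigenvalues `(cos²(λᵢ/8)+λ^W sin²(λᵢ/8))(1−λᵢ)`. -/
theorem framelet_layer_spectrum (n c : ℕ) (Λ : Fin n → ℝ)
    (hΛ : ∀ i, Λ i ∈ Set.Icc (0 : ℝ) 2)
    (U : Matrix (Fin n) (Fin n) ℝ) (hU : Uᵀ * U = 1) (hU' : U * Uᵀ = 1)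
    (lamW : ℝ)
    (Ahat W0 W1 : Matrix (Fin n) (Fin n) ℝ)
    (hA : Ahat = Uᵀ * Matrix.diagonal (fun i => 1 - Λ i) * U)
    (hW0 : W0 = Uᵀ * Matrix.diagonal (fun i => Real.cos (Λ i / 8)) * U)
    (hW1 : W1 = Uᵀ * Matrix.diagonal (fun i => Real.sin (Λ i / 8)) * U)
    (T : Matrix (Fin c × Fin n) (Fin c × Fin n) ℝ)
    (hT : T = (1 : Matrix (Fin c) (Fin c) ℝ) ⊗ₖ (W0ᵀ * Ahat * W0)
            + (lamW • (1 : Matrix (Fin c) (Fin c) ℝ)) ⊗ₖ (W1ᵀ * Ahat * W1)) :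
    ∀ (k : Fin c) (i : Fin n),
      T.mulVec (fun p => (if p.1 = k then (1 : ℝ) else 0) * U i p.2)
        = ((Real.cos (Λ i / 8) ^ 2 + lamW * Real.sin (Λ i / 8) ^ 2) * (1 - Λ i)) •
            (fun p => (if p.1 = k then (1 : ℝ) else 0) * U i p.2) :=
  framelet_layer_spectrum_general n c Λ U hU' lamW Ahat W0 W1 hA hW0 hW1 T hT
end

section
/- Let {W_k}_{k=0}^m with Σ_k W_kᵀW_k = Iₙ, Â symmetric, and symmetric weights W_k' ∈ ℝ^{c×c}, ε ∈ ℝ. Set Ω₀ = I_c + εW₀' and Ω_k = I_c − εW_k' for k ≥ 1 in the total framelet energy E^tot. Then the Euler step H' = H − ∇E^tot(H) with stepsize 1 equals H' = W₀ᵀ(Â − εIₙ)W₀ H W₀' + Σ_{k≥1} W_kᵀ(Â + εIₙ)W_k H W_k' (the linearized EE-UFG update). -/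
open Matrix

/-! With `Ω_k = I + a_k W_k'` (`a_0 = ε`, `a_k = -ε` for `k ≥ 1`), the part `a_k W_k'` of `Ω_k`
merges into the propagation term as the shift `Â ↦ Â - a_k I`, leaving `Σ_k W_kᵀ W_k H` behind;
by the tight-frame identity `Σ_k W_kᵀ W_k = I` that sum is `H`, which cancels in `H - ∇E^tot(H)`. -/

section

variable {ι m n p R : Type*} [Fintype m] [Fintype n]

theorem sum_transpose_mul_self_mul_of_sum_eq_one [Fintype ι] [DecidableEq n] [NonAssocSemiring R]
    {W : ι → Matrix m n R} (htight : ∑ k, (W k)ᵀ * W k = 1) (H : Matrix n p R) :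
    ∑ k, (W k)ᵀ * W k * H = H := by
  rw [← Matrix.sum_mul, htight, Matrix.one_mul]

theorem transpose_mul_self_mul_one_add_smul_sub [Fintype p] [DecidableEq m] [DecidableEq p]
    [CommRing R] (W : Matrix m n R) (A : Matrix m m R) (H : Matrix n p R) (W' : Matrix p p R)
    (a : R) :
    Wᵀ * W * H * (1 + a • W') - Wᵀ * A * W * H * W'
      = Wᵀ * W * H - Wᵀ * (A - a • 1) * W * H * W' := by
  simp only [Matrix.mul_add, Matrix.mul_sub, Matrix.sub_mul, Matrix.mul_smul, Matrix.smul_mul,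
    Matrix.mul_one]
  abel

end

theorem ee_ufg_is_gradient_flow_step_general (n c m : ℕ)
    (W : Fin (m + 1) → Matrix (Fin n) (Fin n) ℝ)
    (htight : ∑ k, (W k)ᵀ * W k = 1)
    (Ω W' : Fin (m + 1) → Matrix (Fin c) (Fin c) ℝ)
    (Ahat : Matrix (Fin n) (Fin n) ℝ)
    (ε : ℝ)
    (hΩ0 : Ω 0 = 1 + ε • W' 0)
    (hΩk : ∀ k, k ≠ 0 → Ω k = 1 - ε • W' k)
    (gradE : Matrix (Fin n) (Fin c) ℝ → Matrix (Fin n) (Fin c) ℝ)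
    (hgrad : ∀ H, gradE H
      = ∑ k, ((W k)ᵀ * W k * H * Ω k - (W k)ᵀ * Ahat * W k * H * W' k)) :
    ∀ H : Matrix (Fin n) (Fin c) ℝ,
      H - gradE H
        = (W 0)ᵀ * (Ahat - ε • (1 : Matrix (Fin n) (Fin n) ℝ)) * W 0 * H * W' 0
          + ∑ k ∈ Finset.univ.erase 0,
              (W k)ᵀ * (Ahat + ε • (1 : Matrix (Fin n) (Fin n) ℝ)) * W k * H * W' k := by
  intro H
  have hlow : (W 0)ᵀ * W 0 * H * Ω 0 - (W 0)ᵀ * Ahat * W 0 * H * W' 0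
      = (W 0)ᵀ * W 0 * H - (W 0)ᵀ * (Ahat - ε • 1) * W 0 * H * W' 0 := by
    rw [hΩ0, transpose_mul_self_mul_one_add_smul_sub]
  have hhigh : ∀ k ∈ Finset.univ.erase 0,
      (W k)ᵀ * W k * H * Ω k - (W k)ᵀ * Ahat * W k * H * W' k
        = (W k)ᵀ * W k * H - (W k)ᵀ * (Ahat + ε • 1) * W k * H * W' k := by
    intro k hk
    rw [hΩk k (Finset.ne_of_mem_erase hk), sub_eq_add_neg (1 : Matrix _ _ ℝ), ← neg_smul,
      transpose_mul_self_mul_one_add_smul_sub, neg_smul, sub_neg_eq_add]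
  have hsplit := sum_transpose_mul_self_mul_of_sum_eq_one htight H
  rw [← Finset.add_sum_erase _ _ (Finset.mem_univ 0)] at hsplit
  rw [hgrad, ← Finset.add_sum_erase _ _ (Finset.mem_univ 0), hlow, Finset.sum_congr rfl hhigh,
    Finset.sum_sub_distrib]
  nth_rw 1 [← hsplit]
  abel

/-- EE-UFG as gradient flow: with `Ω₀ = I_c + εW₀'` and `Ω_k = I_c − εW_k'` for
`k ≥ 1`, the Euler step `H − ∇E^tot(H)` equals the linearized EE-UFG update
`W₀ᵀ(Â − εI)W₀ H W₀' + Σ_{k≥1} W_kᵀ(Â + εI)W_k H W_k'`. -/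
theorem ee_ufg_is_gradient_flow_step (n c m : ℕ)
    (W : Fin (m + 1) → Matrix (Fin n) (Fin n) ℝ)
    (htight : ∑ k, (W k)ᵀ * W k = 1)
    (Ω W' : Fin (m + 1) → Matrix (Fin c) (Fin c) ℝ)
    (hW's : ∀ k, (W' k).IsSymm)
    (Ahat : Matrix (Fin n) (Fin n) ℝ) (hA : Ahat.IsSymm)
    (ε : ℝ)
    (hΩ0 : Ω 0 = 1 + ε • W' 0)
    (hΩk : ∀ k, k ≠ 0 → Ω k = 1 - ε • W' k)
    (gradE : Matrix (Fin n) (Fin c) ℝ → Matrix (Fin n) (Fin c) ℝ)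
    (hgrad : ∀ H, gradE H
      = ∑ k, ((W k)ᵀ * W k * H * Ω k - (W k)ᵀ * Ahat * W k * H * W' k)) :
    ∀ H : Matrix (Fin n) (Fin c) ℝ,
      H - gradE H
        = (W 0)ᵀ * (Ahat - ε • (1 : Matrix (Fin n) (Fin n) ℝ)) * W 0 * H * W' 0
          + ∑ k ∈ Finset.univ.erase 0,
              (W k)ᵀ * (Ahat + ε • (1 : Matrix (Fin n) (Fin n) ℝ)) * W k * H * W' k :=
  ee_ufg_is_gradient_flow_step_general n c m W htight Ω W' Ahat ε hΩ0 hΩk gradE hgrad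
end
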